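/- arXiv:1906.11391 — 2 statements merged into one kernel-verified Lean document; each statement's English description precedes it below -/
import Mathlib

section
/- Let ≻ and ≻' be preference profiles on the market ⟨A,B⟩ that coincide for every agent other than a fixed agent k ∈ A ∪ B. Let m be a matching that is stable with respect to ≻ and let m' be a matching that is stable with respect to ≻'. If m(k) = k and m'(k) = k, then for every agent ℓ ∈ A ∪ B, m(ℓ) = ℓ if and only if m'(ℓ) = ℓ; that is, the set of unmatched agents other than k is independent of k's submitted preference list so long as k remains unmatched. -/
/-! Let `S_A` be the agents of `A` strictly better off under `m` than under `m'`, and `S_B` the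
agents of `B` strictly better off under `m'` than under `m`. Stability of `m'` forces the
`m`-partner of every `a ∈ S_A` into `S_B`, and stability of `m` forces the `m'`-partner of every
`b ∈ S_B` into `S_A`. Only agents matched under both matchings take part, so the agents whose
preferences differ never intervene. Both partner maps are injective, and an `a₀` matched under `m`
but not under `m'` lies in `S_A` without being an `m'`-partner, so `|S_A| ≤ |S_B| < |S_A|`. -/

namespace StaticMatch

/-- A strict preference ranking over partners in `X` and the option of remaining
unmatched (encoded by `none`): a strict total order. -/
structure Pref (X : Type) where
  pref : Option X → Option X → Prop
  trichotomous : ∀ x y, x = y ∨ pref x y ∨ pref y x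
  irrefl : ∀ x, ¬ pref x x
  trans : ∀ x y z, pref x y → pref y z → pref x z

/-- A matching of the two sides `A` and `B`: an involution where `none` encodes being
unmatched. -/
structure Matching (A B : Type) where
  mA : A → Option B
  mB : B → Option A
  inv : ∀ a b, mA a = some b ↔ mB b = some a

/-- Stability of `m` with respect to the preference profile `(pA, pB)`: individual
rationality and absence of blocking pairs. -/
def Stable {A B : Type} (pA : A → Pref B) (pB : B → Pref A) (m : Matching A B) : Prop :=
  (∀ a : A, ¬ (pA a).pref none (m.mA a)) ∧
  (∀ b : B, ¬ (pB b).pref none (m.mB b)) ∧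
  ¬ ∃ (a : A) (b : B), (pA a).pref (some b) (m.mA a) ∧ (pB b).pref (some a) (m.mB b)

variable {A B : Type}

theorem Pref.pref_of_not_pref {X : Type} (p : Pref X) {x y : Option X} (h : ¬ p.pref x y)
    (hne : x ≠ y) : p.pref y x :=
  ((p.trichotomous x y).resolve_left hne).resolve_left h

def Matching.flip (m : Matching A B) : Matching B A :=
  ⟨m.mB, m.mA, fun b a => (m.inv a b).symm⟩

theorem Matching.injOn_mA (m : Matching A B) : Set.InjOn m.mA {a | m.mA a ≠ none} := by
  intro a₁ h₁ a₂ _ h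
  obtain ⟨b, hb⟩ := Option.ne_none_iff_exists'.mp h₁
  exact Option.some_injective _ (((m.inv a₁ b).mp hb).symm.trans ((m.inv a₂ b).mp (h ▸ hb)))

theorem Stable.flip {pA : A → Pref B} {pB : B → Pref A} {m : Matching A B}
    (h : Stable pA pB m) : Stable pB pA m.flip :=
  ⟨h.2.1, h.1, fun ⟨b, a, hb, ha⟩ => h.2.2 ⟨a, b, ha, hb⟩⟩

theorem Stable.pref_mB_of_pref {pA : A → Pref B} {pB : B → Pref A} {m : Matching A B}
    (hm : Stable pA pB m) {a : A} {b : B} (h : (pA a).pref (some b) (m.mA a)) :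
    (pB b).pref (m.mB b) (some a) := by
  refine (pB b).pref_of_not_pref (fun hb => hm.2.2 ⟨a, b, h, hb⟩) fun hab => ?_
  rw [(m.inv a b).mpr hab.symm] at h
  exact (pA a).irrefl _ h

theorem Stable.exists_partner_pref_of_pref {pA pA' : A → Pref B} {pB pB' : B → Pref A}
    {m m' : Matching A B} (hm' : Stable pA' pB' m') {a : A}
    (ha : (pA a).pref (m.mA a) (m'.mA a)) (hpa : pA a = pA' a)
    (hpB : ∀ b, m.mA a = some b → pB b = pB' b) :
    ∃ b, m.mA a = some b ∧ (pB b).pref (m'.mB b) (m.mB b) := by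
  rw [hpa] at ha
  obtain ⟨b, hab⟩ := Option.ne_none_iff_exists'.mp fun h => hm'.1 a (h ▸ ha)
  rw [hab] at ha
  refine ⟨b, hab, ?_⟩
  rw [(m.inv a b).mp hab, hpB b hab]
  exact hm'.pref_mB_of_pref ha

theorem Matching.ncard_le_of_forall_mA_mem [Finite B] (m : Matching A B) {s : Set A} {t : Set B}
    (h : ∀ a ∈ s, ∃ b ∈ t, m.mA a = some b) : s.ncard ≤ t.ncard := by
  rw [← Set.ncard_image_of_injective t (Option.some_injective B)]
  refine Set.ncard_le_ncard_of_injOn m.mA (fun a ha => ?_) (m.injOn_mA.mono fun a ha => ?_)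
  · obtain ⟨b, hb, hab⟩ := h a ha
    exact ⟨b, hb, hab.symm⟩
  · obtain ⟨b, -, hab⟩ := h a ha
    simp [hab]

section Finite

variable [Finite A] [Finite B] {pA pA' : A → Pref B} {pB pB' : B → Pref A} {m m' : Matching A B}

theorem mA_eq_none_of_mA_eq_none (hm : Stable pA pB m) (hm' : Stable pA' pB' m')
    (hA : ∀ a, pA a ≠ pA' a → m.mA a = none ∧ m'.mA a = none)
    (hB : ∀ b, pB b ≠ pB' b → m.mB b = none) {a₀ : A} (h' : m'.mA a₀ = none) :
    m.mA a₀ = none := by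
  by_contra h₀
  set SA := {a | (pA a).pref (m.mA a) (m'.mA a)}
  set SB := {b | (pB b).pref (m'.mB b) (m.mB b)}
  have ha₀ : a₀ ∈ SA := by
    show (pA a₀).pref _ _
    rw [h']
    exact (pA a₀).pref_of_not_pref (hm.1 a₀) (Ne.symm h₀)
  have hSA : SA.ncard ≤ SB.ncard := m.ncard_le_of_forall_mA_mem fun a ha => by
    have hpa : pA a = pA' a := by
      by_contra hne
      obtain ⟨h₁, h₂⟩ := hA a hne
      rw [Set.mem_ofPred_eq, h₁, h₂] at ha
      exact (pA a).irrefl _ ha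
    obtain ⟨b, hab, hb⟩ := hm'.exists_partner_pref_of_pref ha hpa fun b hab =>
      not_imp_comm.mp (hB b) (by simp [(m.inv a b).mp hab])
    exact ⟨b, hb, hab⟩
  have hSB : SB.ncard ≤ (SA \ {a₀}).ncard := m'.flip.ncard_le_of_forall_mA_mem fun b hb => by
    obtain ⟨a, hba, ha⟩ :=
      hm.flip.exists_partner_pref_of_pref (m := m'.flip) hb rfl fun _ _ => rfl
    refine ⟨a, ⟨ha, ?_⟩, hba⟩
    rintro rfl
    simpa [h'] using (m'.inv a b).mpr hba
  exact (hSA.trans hSB).not_gt (Set.ncard_sdiff_singleton_lt_of_mem ha₀)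

theorem mA_eq_none_iff (hm : Stable pA pB m) (hm' : Stable pA' pB' m')
    (hA : ∀ a, pA a ≠ pA' a → m.mA a = none ∧ m'.mA a = none)
    (hB : ∀ b, pB b ≠ pB' b → m.mB b = none ∧ m'.mB b = none) (a : A) :
    m.mA a = none ↔ m'.mA a = none :=
  ⟨mA_eq_none_of_mA_eq_none hm' hm (fun a h => (hA a (Ne.symm h)).symm)
      (fun b h => (hB b (Ne.symm h)).2),
    mA_eq_none_of_mA_eq_none hm hm' hA (fun b h => (hB b h).1)⟩

theorem mB_eq_none_iff (hm : Stable pA pB m) (hm' : Stable pA' pB' m')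
    (hA : ∀ a, pA a ≠ pA' a → m.mA a = none ∧ m'.mA a = none)
    (hB : ∀ b, pB b ≠ pB' b → m.mB b = none ∧ m'.mB b = none) (b : B) :
    m.mB b = none ↔ m'.mB b = none :=
  mA_eq_none_iff hm.flip hm'.flip hB hA b

end Finite

theorem unmatched_agents_independent_of_k_general {A B : Type} [Fintype A] [Fintype B]
    (pA pA' : A → Pref B) (pB pB' : B → Pref A) (k : A ⊕ B)
    (hagreeA : ∀ a : A, Sum.inl a ≠ k → pA a = pA' a)
    (hagreeB : ∀ b : B, Sum.inr b ≠ k → pB b = pB' b)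
    (m m' : Matching A B)
    (hm : Stable pA pB m) (hm' : Stable pA' pB' m')
    (hkA : ∀ a : A, Sum.inl a = k → m.mA a = none ∧ m'.mA a = none)
    (hkB : ∀ b : B, Sum.inr b = k → m.mB b = none ∧ m'.mB b = none) :
    (∀ a : A, m.mA a = none ↔ m'.mA a = none) ∧
    (∀ b : B, m.mB b = none ↔ m'.mB b = none) := by
  have hA : ∀ a, pA a ≠ pA' a → m.mA a = none ∧ m'.mA a = none := fun a h =>
    hkA a (not_imp_comm.mp (hagreeA a) h)
  have hB : ∀ b, pB b ≠ pB' b → m.mB b = none ∧ m'.mB b = none := fun b h =>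
    hkB b (not_imp_comm.mp (hagreeB b) h)
  exact ⟨mA_eq_none_iff hm hm' hA hB, mB_eq_none_iff hm hm' hA hB⟩

/-- Let `≻` and `≻'` be preference profiles coinciding for every agent
other than a fixed agent `k`, let `m` be stable for `≻` and `m'` stable for `≻'`.
If `k` is unmatched under both `m` and `m'`, then every agent is unmatched under `m`
if and only if they are unmatched under `m'`. -/
theorem unmatched_agents_independent_of_k {A B : Type} [Fintype A] [Fintype B]
    [DecidableEq A] [DecidableEq B]
    (pA pA' : A → Pref B) (pB pB' : B → Pref A) (k : A ⊕ B)
    (hagreeA : ∀ a : A, Sum.inl a ≠ k → pA a = pA' a)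
    (hagreeB : ∀ b : B, Sum.inr b ≠ k → pB b = pB' b)
    (m m' : Matching A B)
    (hm : Stable pA pB m) (hm' : Stable pA' pB' m')
    (hkA : ∀ a : A, Sum.inl a = k → m.mA a = none ∧ m'.mA a = none)
    (hkB : ∀ b : B, Sum.inr b = k → m.mB b = none ∧ m'.mB b = none) :
    (∀ a : A, m.mA a = none ↔ m'.mA a = none) ∧
    (∀ b : B, m.mB b = none ↔ m'.mB b = none) :=
  unmatched_agents_independent_of_k_general pA pA' pB pB' k hagreeA hagreeB m m' hm hm' hkA hkB

end StaticMatch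
end

section
/- Consider T = 2 and the economy G_2 degenerate on the realization E^2 with A_1 = {k, g}, B_1 = {s}, A_2 = {e}, B_2 = {t, n}. Suppose the discount factors δ ∈ [0,1) and utilities satisfy: u(e,n) > 0 > max(u(e,s), u(e,t)); δ_k·u(k,t) > u(k,n) > u(k,s) > δ_k·u(k,n) > 0; u(g,s) > δ_g·u(g,t) > 0 > u(g,n) and u(g,s) > u(g,t); v(k,s) > v(g,s) > 0 > v(e,s); v(g,t) > v(k,t) > 0 > v(e,t); v(k,n) > v(e,n) > 0 > v(g,n). Then the matching m^{B-DA} — which in period 1 matches k with s, and in period 2 matches g with t and e with n — is NOT dynamically stable for G_2: condition (DS2) fails for agent k at (1, E^1), since every m̄ ∈ M_D(k, m^{B-DA}, E^1) gives k the payoff δ_k·u(k,t) > u(k,s). -/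
namespace DynMatch

open scoped Classical

/-- A realization of arrivals of length `t`: in each period `i < t`, the sets of agents
arriving on side `A` and on side `B`; arrival sets are pairwise disjoint on each side. -/
structure Realization (A B : Type) (t : ℕ) where
  arrA : Fin t → Finset A
  arrB : Fin t → Finset B
  disjA : ∀ i j : Fin t, i ≠ j → Disjoint (arrA i) (arrA j)
  disjB : ∀ i j : Fin t, i ≠ j → Disjoint (arrB i) (arrB j)

namespace Realization

variable {A B : Type}

theorem ext' {t : ℕ} {E F : Realization A B t} (hA : E.arrA = F.arrA)
    (hB : E.arrB = F.arrB) : E = F := by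
  cases E; cases F; dsimp at hA hB; subst hA; subst hB; rfl

/-- The truncation of a realization to its first `s` periods. -/
def trunc {t : ℕ} (E : Realization A B t) {s : ℕ} (h : s ≤ t) : Realization A B s where
  arrA i := E.arrA (Fin.castLE h i)
  arrB i := E.arrB (Fin.castLE h i)
  disjA i j hij := E.disjA _ _ fun hc => hij (Fin.castLE_injective h hc)
  disjB i j hij := E.disjB _ _ fun hc => hij (Fin.castLE_injective h hc)

theorem trunc_trunc {t s r : ℕ} (E : Realization A B t) (h : s ≤ t) (h' : r ≤ s) :
    (E.trunc h).trunc h' = E.trunc (h'.trans h) := by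
  apply ext' <;> funext i <;> (simp only [trunc]; congr 1)

/-- Cumulative arrivals on side `A` through period `s`. -/
noncomputable def Abar {t : ℕ} (E : Realization A B t) (s : ℕ) : Finset A :=
  Finset.univ.biUnion fun i : Fin t => if (i : ℕ) < s then E.arrA i else ∅

/-- Cumulative arrivals on side `B` through period `s`. -/
noncomputable def Bbar {t : ℕ} (E : Realization A B t) (s : ℕ) : Finset B :=
  Finset.univ.biUnion fun i : Fin t => if (i : ℕ) < s then E.arrB i else ∅

theorem mem_Abar {t : ℕ} (E : Realization A B t) (s : ℕ) (a : A) :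
    a ∈ E.Abar s ↔ ∃ i : Fin t, (i : ℕ) < s ∧ a ∈ E.arrA i := by
  simp only [Abar, Finset.mem_biUnion, Finset.mem_univ, true_and]
  constructor
  · rintro ⟨i, hi⟩
    by_cases h : (i : ℕ) < s
    · exact ⟨i, h, by simpa [h] using hi⟩
    · simp [h] at hi
  · rintro ⟨i, h, hi⟩
    exact ⟨i, by simp [h, hi]⟩

theorem mem_Bbar {t : ℕ} (E : Realization A B t) (s : ℕ) (b : B) :
    b ∈ E.Bbar s ↔ ∃ i : Fin t, (i : ℕ) < s ∧ b ∈ E.arrB i := by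
  simp only [Bbar, Finset.mem_biUnion, Finset.mem_univ, true_and]
  constructor
  · rintro ⟨i, hi⟩
    by_cases h : (i : ℕ) < s
    · exact ⟨i, h, by simpa [h] using hi⟩
    · simp [h] at hi
  · rintro ⟨i, h, hi⟩
    exact ⟨i, by simp [h, hi]⟩

end Realization

/-- `Follows F E` : the realization `F` follows (extends) the realization `E`,
i.e. `E` is a truncation of `F`. -/
def Follows {A B : Type} {s t : ℕ} (F : Realization A B t) (E : Realization A B s) : Prop :=
  ∃ h : s ≤ t, F.trunc h = E

variable {A B : Type}

/-- A period-`t` matching for the realization `E`: a one-to-one pairing between the agents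
on side `A` and side `B` that have arrived through period `t`; `none` encodes being
unmatched (i.e. matched to oneself). -/
structure PeriodMatching {t : ℕ} (E : Realization A B t) where
  mA : A → Option B
  mB : B → Option A
  inv : ∀ a b, mA a = some b ↔ mB b = some a
  memA : ∀ a b, mA a = some b → a ∈ E.Abar t ∧ b ∈ E.Bbar t

/-- A matching for the dynamic economy: a period matching for every realization of every
length, subject to irreversibility. -/
structure Matching (A B : Type) where
  pm : ∀ {t : ℕ} (E : Realization A B t), PeriodMatching E
  irrevA : ∀ {s t : ℕ} (h : s ≤ t) (E : Realization A B t) (a : A) (b : B),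
    (pm (E.trunc h)).mA a = some b → (pm E).mA a = some b

/-- Primitives of the market: Bernoulli utilities and discount factors in `[0,1)`.
The utility of remaining unmatched is normalized to `0` (`u(a,a)=0`, `v(b,b)=0`). -/
structure Market (A B : Type) where
  u : A → B → ℝ
  v : A → B → ℝ
  dA : A → ℝ
  dB : B → ℝ
  dA_nonneg : ∀ a, 0 ≤ dA a
  dA_lt_one : ∀ a, dA a < 1
  dB_nonneg : ∀ b, 0 ≤ dB b
  dB_lt_one : ∀ b, dB b < 1

/-- An economy of length `T`: a probability distribution on realizations of length `T`. -/
structure Economy (A B : Type) (T : ℕ) where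
  prob : Realization A B T → ℝ
  nonneg : ∀ E, 0 ≤ prob E
  finsupp : (Function.support prob).Finite
  total : ∑ᶠ E, prob E = 1

/-- Total mass of realizations following `E`. -/
noncomputable def condMass {T t : ℕ} (G : Economy A B T) (E : Realization A B t) : ℝ :=
  ∑ᶠ (F : Realization A B T) (_ : Follows F E), G.prob F

/-- Conditional probability of the length-`T` realization `F` given the truncation `E`. -/
noncomputable def cond {T t : ℕ} (G : Economy A B T) (E : Realization A B t)
    (F : Realization A B T) : ℝ :=
  if Follows F E then G.prob F / condMass G E else 0

/-- `E` is in the support of the economy `G`. -/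
def InSupport {T t : ℕ} (G : Economy A B T) (E : Realization A B t) : Prop :=
  ∃ F : Realization A B T, Follows F E ∧ 0 < G.prob F

/-- The first period `s` with `t ≤ s ≤ n` at which `a` is matched under `m` along the
realization `F`; equal to `n` if `a` stays unmatched. -/
noncomputable def matchTimeA (m : Matching A B) {n : ℕ} (F : Realization A B n) (a : A)
    (t : ℕ) : ℕ :=
  sInf ({ s : ℕ | t ≤ s ∧ ∃ h : s ≤ n, ((m.pm (F.trunc h)).mA a).isSome } ∪ {n})

noncomputable def matchTimeB (m : Matching A B) {n : ℕ} (F : Realization A B n) (b : B)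
    (t : ℕ) : ℕ :=
  sInf ({ s : ℕ | t ≤ s ∧ ∃ h : s ≤ n, ((m.pm (F.trunc h)).mB b).isSome } ∪ {n})

/-- Expected discounted payoff of side-`A` agent `a` from matching `m` at date `t`,
when the realization so far is `E`. -/
noncomputable def Upay (M : Market A B) {T : ℕ} (G : Economy A B T) (m : Matching A B)
    (a : A) {t : ℕ} (E : Realization A B t) : ℝ :=
  ∑ᶠ F : Realization A B T,
    cond G E F * (M.dA a ^ (matchTimeA m F a t - t) * ((m.pm F).mA a).elim 0 (M.u a))

/-- Expected discounted payoff of side-`B` agent `b` from matching `m` at date `t`. -/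
noncomputable def Vpay (M : Market A B) {T : ℕ} (G : Economy A B T) (m : Matching A B)
    (b : B) {t : ℕ} (E : Realization A B t) : ℝ :=
  ∑ᶠ F : Realization A B T,
    cond G E F * (M.dB b ^ (matchTimeB m F b t - t) * ((m.pm F).mB b).elim 0 (fun a => M.v a b))

/-- The set of side-`A` agents available to match at `E` (arrived and unmatched as of the
previous period). -/
noncomputable def availA (m : Matching A B) {t : ℕ} (E : Realization A B t) : Finset A :=
  (E.Abar t).filter fun a => (m.pm (E.trunc (Nat.sub_le t 1))).mA a = none

noncomputable def availB (m : Matching A B) {t : ℕ} (E : Realization A B t) : Finset B :=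
  (E.Bbar t).filter fun b => (m.pm (E.trunc (Nat.sub_le t 1))).mB b = none

/-- The agents on side `A` left unmatched at the end of the last period of `E` under `m`. -/
noncomputable def unmatchedA (m : Matching A B) {t : ℕ} (E : Realization A B t) : Finset A :=
  (E.Abar t).filter fun a => (m.pm E).mA a = none

noncomputable def unmatchedB (m : Matching A B) {t : ℕ} (E : Realization A B t) : Finset B :=
  (E.Bbar t).filter fun b => (m.pm E).mB b = none

/-- `mbar` coincides with `m` at every realization (of length `≤ T`) that does not
follow `E`: membership in `M_T(m, E^t)`. -/
def SameOff (T : ℕ) (m mbar : Matching A B) {t : ℕ} (E : Realization A B t) : Prop :=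
  ∀ (s : ℕ), s ≤ T → ∀ F : Realization A B s, ¬ Follows F E → mbar.pm F = m.pm F

/-- Static stability of a one-period matching of the pools `(Ah, Bh)` with respect to the
true utilities: individual rationality plus absence of blocking pairs. -/
def IsStaticStable (M : Market A B) (Ah : Finset A) (Bh : Finset B)
    (mA : A → Option B) (mB : B → Option A) : Prop :=
  (∀ a ∈ Ah, 0 ≤ (mA a).elim 0 (M.u a)) ∧
  (∀ b ∈ Bh, 0 ≤ (mB b).elim 0 (fun a => M.v a b)) ∧
  ¬ ∃ a ∈ Ah, ∃ b ∈ Bh,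
      (mA a).elim 0 (M.u a) < M.u a b ∧ (mB b).elim 0 (fun a' => M.v a' b) < M.v a b

/-- The period-`t` matching `m(E^t)` is stable amongst those who match in period `t`. -/
def StableAmongMatched (M : Market A B) (m : Matching A B) {t : ℕ}
    (E : Realization A B t) : Prop :=
  (∀ a ∈ availA m E, ∀ b, (m.pm E).mA a = some b → 0 ≤ M.u a b) ∧
  (∀ b ∈ availB m E, ∀ a, (m.pm E).mB b = some a → 0 ≤ M.v a b) ∧
  ¬ ∃ a ∈ availA m E, ∃ b ∈ availB m E,
      ((m.pm E).mA a).isSome ∧ ((m.pm E).mB b).isSome ∧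
      ((m.pm E).mA a).elim 0 (M.u a) < M.u a b ∧
      ((m.pm E).mB b).elim 0 (fun a' => M.v a' b) < M.v a b

/-- The continuation realization induced by a length-`n` realization `F` after period `t`,
given the matching `m`: its first-period arrivals consist of the agents left unmatched by
`m` at the end of period `t` together with the period-`t+1` arrivals of `F`; afterwards it
coincides with `F`. -/
noncomputable def contReal (m : Matching A B) {n : ℕ} (F : Realization A B n) (t : ℕ) :
    Realization A B (n - t) where
  arrA i :=
    if (i : ℕ) = 0 then
      unmatchedA m (F.trunc (show t ≤ n by have := i.isLt; omega)) ∪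
        F.arrA ⟨t, by have := i.isLt; omega⟩
    else F.arrA ⟨t + (i : ℕ), by have := i.isLt; omega⟩
  arrB i :=
    if (i : ℕ) = 0 then
      unmatchedB m (F.trunc (show t ≤ n by have := i.isLt; omega)) ∪
        F.arrB ⟨t, by have := i.isLt; omega⟩
    else F.arrB ⟨t + (i : ℕ), by have := i.isLt; omega⟩
  disjA := by
    intro i j hij
    have hi := i.isLt; have hj := j.isLt
    have hne : (i : ℕ) ≠ (j : ℕ) := fun hc => hij (Fin.ext hc)
    have key : ∀ (S : Finset A) (k : ℕ) (hk : k < n), (∀ a ∈ S, ∃ l : ℕ, l ≤ t ∧ ∃ hl : l < n,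
        a ∈ F.arrA ⟨l, hl⟩) → t < k → Disjoint S (F.arrA ⟨k, hk⟩) := by
      intro S k hk hS htk
      refine Finset.disjoint_left.mpr ?_
      intro a haS hak
      obtain ⟨l, hlt, hl, hal⟩ := hS a haS
      have hne' : (⟨l, hl⟩ : Fin n) ≠ ⟨k, hk⟩ := by
        intro hc
        have : l = k := congrArg Fin.val hc
        omega
      exact Finset.disjoint_left.mp (F.disjA _ _ hne') hal hak
    have hsub : ∀ (ht : t ≤ n) a, a ∈ unmatchedA m (F.trunc ht) ∪ F.arrA ⟨t, by
        have : (0:ℕ) < n - t ∨ True := Or.inr trivial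
        exact lt_of_lt_of_le (Nat.lt_succ_self t) (by omega)⟩ → True := fun _ _ _ => trivial
    try dsimp only
    split_ifs with h0i h0j h0j
    · omega
    · -- i = 0, j ≠ 0
      apply Finset.disjoint_union_left.mpr
      constructor
      · refine key _ _ _ ?_ (by omega)
        intro a ha
        have ha' := Finset.mem_filter.mp ha
        obtain ⟨k, hk, hak⟩ := (Realization.mem_Abar _ _ _).mp ha'.1
        refine ⟨(k : ℕ), by omega, by omega, ?_⟩
        simpa [Realization.trunc, Fin.castLE] using hak
      · refine key _ _ _ ?_ (by omega)
        intro a ha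
        exact ⟨t, le_refl t, by omega, ha⟩
    · -- j = 0, i ≠ 0
      apply Disjoint.symm
      apply Finset.disjoint_union_left.mpr
      constructor
      · refine key _ _ _ ?_ (by omega)
        intro a ha
        have ha' := Finset.mem_filter.mp ha
        obtain ⟨k, hk, hak⟩ := (Realization.mem_Abar _ _ _).mp ha'.1
        refine ⟨(k : ℕ), by omega, by omega, ?_⟩
        simpa [Realization.trunc, Fin.castLE] using hak
      · refine key _ _ _ ?_ (by omega)
        intro a ha
        exact ⟨t, le_refl t, by omega, ha⟩
    · exact F.disjA ⟨t + i, by omega⟩ ⟨t + j, by omega⟩ (by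
        intro hc
        have : t + (i : ℕ) = t + (j : ℕ) := congrArg Fin.val hc
        omega)
  disjB := by
    intro i j hij
    have hi := i.isLt; have hj := j.isLt
    have hne : (i : ℕ) ≠ (j : ℕ) := fun hc => hij (Fin.ext hc)
    have key : ∀ (S : Finset B) (k : ℕ) (hk : k < n), (∀ b ∈ S, ∃ l : ℕ, l ≤ t ∧ ∃ hl : l < n,
        b ∈ F.arrB ⟨l, hl⟩) → t < k → Disjoint S (F.arrB ⟨k, hk⟩) := by
      intro S k hk hS htk
      refine Finset.disjoint_left.mpr ?_
      intro b hbS hbk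
      obtain ⟨l, hlt, hl, hbl⟩ := hS b hbS
      have hne' : (⟨l, hl⟩ : Fin n) ≠ ⟨k, hk⟩ := by
        intro hc
        have : l = k := congrArg Fin.val hc
        omega
      exact Finset.disjoint_left.mp (F.disjB _ _ hne') hbl hbk
    try dsimp only
    split_ifs with h0i h0j h0j
    · omega
    · apply Finset.disjoint_union_left.mpr
      constructor
      · refine key _ _ _ ?_ (by omega)
        intro b hb
        have hb' := Finset.mem_filter.mp hb
        obtain ⟨k, hk, hbk⟩ := (Realization.mem_Bbar _ _ _).mp hb'.1
        refine ⟨(k : ℕ), by omega, by omega, ?_⟩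
        simpa [Realization.trunc, Fin.castLE] using hbk
      · refine key _ _ _ ?_ (by omega)
        intro b hb
        exact ⟨t, le_refl t, by omega, hb⟩
    · apply Disjoint.symm
      apply Finset.disjoint_union_left.mpr
      constructor
      · refine key _ _ _ ?_ (by omega)
        intro b hb
        have hb' := Finset.mem_filter.mp hb
        obtain ⟨k, hk, hbk⟩ := (Realization.mem_Bbar _ _ _).mp hb'.1
        refine ⟨(k : ℕ), by omega, by omega, ?_⟩
        simpa [Realization.trunc, Fin.castLE] using hbk
      · refine key _ _ _ ?_ (by omega)
        intro b hb
        exact ⟨t, le_refl t, by omega, hb⟩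
    · exact F.disjB ⟨t + i, by omega⟩ ⟨t + j, by omega⟩ (by
        intro hc
        have : t + (i : ℕ) = t + (j : ℕ) := congrArg Fin.val hc
        omega)

/-- The pushforward of the conditional distribution `G(·|E)` under the map sending a
length-`T` realization `F` following `E` to the induced continuation realization. -/
noncomputable def contPush {T : ℕ} (G : Economy A B T) (m : Matching A B) {t : ℕ}
    (E : Realization A B t) : Realization A B (T - t) → ℝ := fun F' =>
  ∑ᶠ (F : Realization A B T) (_ : Follows F E ∧ contReal m F t = F'), cond G E F

/-- The empty realization. -/
def emptyRealization (A B : Type) (n : ℕ) : Realization A B n :=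
  ⟨fun _ => ∅, fun _ => ∅, fun _ _ _ => Finset.disjoint_empty_left ∅,
    fun _ _ _ => Finset.disjoint_empty_left ∅⟩

/-- The point mass at the empty realization. -/
noncomputable def pointEconomy (A B : Type) (n : ℕ) : Economy A B n where
  prob F := if F = emptyRealization A B n then 1 else 0
  nonneg := by intro E; (try dsimp only); split <;> norm_num
  finsupp := by
    apply Set.Finite.subset (Set.finite_singleton (emptyRealization A B n))
    intro x hx
    by_contra hne
    simp only [Set.mem_singleton_iff] at hne
    simp [Function.mem_support, hne] at hx
  total := by
    rw [finsum_eq_single _ (emptyRealization A B n) (fun x hx => if_neg hx)]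
    simp

/-- The continuation economy of length `T - t` induced by the matching `m` and the
realization `E`: arrivals in its first period are the agents left unmatched by `m` at
the end of period `t` together with the period-`t+1` arrivals, and subsequent arrivals
are as in the original economy, with probabilities given by `G(·|E)`. -/
noncomputable def contEconomy {T : ℕ} (G : Economy A B T) (m : Matching A B) {t : ℕ}
    (E : Realization A B t) : Economy A B (T - t) :=
  if h : ∃ Ec : Economy A B (T - t), Ec.prob = contPush G m E then h.choose
  else pointEconomy A B (T - t)

/-- The continuation of `mbar` after `(t, E)`, restricted to the agents not yet matched
at the end of period `t`, coincides with the matching `m'` of the continuation economy. -/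
def ContAgrees (T : ℕ) (mbar m' : Matching A B) {t : ℕ} (E : Realization A B t) : Prop :=
  ∀ (s : ℕ), 1 ≤ s → t + s ≤ T → ∀ F : Realization A B (t + s), Follows F E →
    (∀ a : A, (mbar.pm E).mA a = none →
      (m'.pm (contReal mbar F t)).mA a = (mbar.pm F).mA a) ∧
    (∀ b : B, (mbar.pm E).mB b = none →
      (m'.pm (contReal mbar F t)).mB b = (mbar.pm F).mB b)

/-- The conjecture set for a side-`A` agent `a` available at `(t, E)`, given a candidate
solution correspondence `D` for continuation economies of length `T - t`. -/
def ConjA (M : Market A B) {T : ℕ} (G : Economy A B T) {t : ℕ} (E : Realization A B t)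
    (m : Matching A B) (a : A) (D : Economy A B (T - t) → Set (Matching A B)) :
    Set (Matching A B) :=
  { mbar | SameOff T m mbar E ∧ (mbar.pm E).mA a = none ∧ StableAmongMatched M mbar E ∧
      ∃ m' ∈ D (contEconomy G mbar E), ContAgrees T mbar m' E }

/-- The conjecture set for a side-`B` agent `b` available at `(t, E)`. -/
def ConjB (M : Market A B) {T : ℕ} (G : Economy A B T) {t : ℕ} (E : Realization A B t)
    (m : Matching A B) (b : B) (D : Economy A B (T - t) → Set (Matching A B)) :
    Set (Matching A B) :=
  { mbar | SameOff T m mbar E ∧ (mbar.pm E).mB b = none ∧ StableAmongMatched M mbar E ∧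
      ∃ m' ∈ D (contEconomy G mbar E), ContAgrees T mbar m' E }

/-- Dynamic stability, defined by recursion on the horizon `T`:
(DS2)/(DS3) no available agent benefits from being unavailable to match, relative to some
conjecture whose continuation is dynamically stable for the continuation economy; and
(DS1) no pair of contemporaneously available agents form a blocking pair. -/
noncomputable def DynStable (M : Market A B) (T : ℕ) : Economy A B T → Set (Matching A B) :=
  fun G =>
  { m | ∀ t : ℕ, 1 ≤ t → t ≤ T → ∀ E : Realization A B t, InSupport G E →
      (∀ a ∈ availA m E, ∃ mbar ∈ ConjA M G E m a (DynStable M (T - t)),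
          Upay M G mbar a E ≤ Upay M G m a E) ∧
      (∀ b ∈ availB m E, ∃ mbar ∈ ConjB M G E m b (DynStable M (T - t)),
          Vpay M G mbar b E ≤ Vpay M G m b E) ∧
      ¬ ∃ a ∈ availA m E, ∃ b ∈ availB m E,
          Upay M G m a E < M.u a b ∧ Vpay M G m b E < M.v a b }
termination_by T
decreasing_by all_goals omega

/-- The conjecture set `M_D(a, m, E^t)` for a side-`A` agent. -/
noncomputable def MD_A (M : Market A B) {T : ℕ} (G : Economy A B T) {t : ℕ}
    (E : Realization A B t) (m : Matching A B) (a : A) : Set (Matching A B) :=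
  ConjA M G E m a (DynStable M (T - t))

/-- The conjecture set `M_D(b, m, E^t)` for a side-`B` agent. -/
noncomputable def MD_B (M : Market A B) {T : ℕ} (G : Economy A B T) {t : ℕ}
    (E : Realization A B t) (m : Matching A B) (b : B) : Set (Matching A B) :=
  ConjB M G E m b (DynStable M (T - t))

end DynMatch

/-
If `k` stays unmatched in period 1, only `g` can be matched then (to `s`), and the last period
of a dynamically stable continuation is a one-period market without blocking pairs. If `g`
took `s`, then `k` and `t` are each other's favourites among the remaining agents. If nobody
matched, `k` not getting `t` forces `t`–`g` (`t` prefers only `g` to `k`), then `s`–`k` (`g`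
prefers `s` to `t`), and then `(k, n)` blocks. Either way every conjecture gives `k` the payoff
`δ_k u(k,t) > u(k,s)`, so waiting is profitable and (DS2) fails for `k` in period 1.
-/

namespace DynMatch

open scoped Classical

variable {A B : Type}

namespace Realization

theorem follows_trunc {s t : ℕ} (E : Realization A B t) (h : s ≤ t) : Follows E (E.trunc h) :=
  ⟨h, rfl⟩

theorem follows_self {t : ℕ} (E : Realization A B t) : Follows E E :=
  ⟨le_rfl, ext' rfl rfl⟩

theorem Abar_one {n : ℕ} (F : Realization A B n) (hn : 0 < n) :
    F.Abar 1 = F.arrA ⟨0, hn⟩ := by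
  ext a
  rw [mem_Abar]
  refine ⟨fun ⟨i, hi, ha⟩ => ?_, fun ha => ⟨_, Nat.one_pos, ha⟩⟩
  obtain rfl : i = ⟨0, hn⟩ := Fin.ext (Nat.lt_one_iff.1 hi)
  exact ha

theorem Bbar_one {n : ℕ} (F : Realization A B n) (hn : 0 < n) :
    F.Bbar 1 = F.arrB ⟨0, hn⟩ := by
  ext b
  rw [mem_Bbar]
  refine ⟨fun ⟨i, hi, hb⟩ => ?_, fun hb => ⟨_, Nat.one_pos, hb⟩⟩
  obtain rfl : i = ⟨0, hn⟩ := Fin.ext (Nat.lt_one_iff.1 hi)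
  exact hb

end Realization

theorem contReal_Abar_one (m : Matching A B) {n t : ℕ} (F : Realization A B n) (h : t < n) :
    (contReal m F t).Abar 1 = unmatchedA m (F.trunc h.le) ∪ F.arrA ⟨t, h⟩ := by
  rw [Realization.Abar_one _ (by omega)]
  rfl

theorem contReal_Bbar_one (m : Matching A B) {n t : ℕ} (F : Realization A B n) (h : t < n) :
    (contReal m F t).Bbar 1 = unmatchedB m (F.trunc h.le) ∪ F.arrB ⟨t, h⟩ := by
  rw [Realization.Bbar_one _ (by omega)]
  rfl

namespace PeriodMatching

variable {t : ℕ} {E : Realization A B t} (P : PeriodMatching E)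

theorem mem_Abar_of_mB_eq_some {a : A} {b : B} (h : P.mB b = some a) : a ∈ E.Abar t :=
  (P.memA a b ((P.inv a b).mpr h)).1

theorem mA_eq_none_of_length_zero {E : Realization A B 0} (P : PeriodMatching E) (a : A) :
    P.mA a = none :=
  Option.eq_none_iff_forall_ne_some.2 fun b h =>
    let ⟨i, _⟩ := (E.mem_Abar 0 a).1 (P.memA a b h).1
    i.elim0

theorem mB_eq_none_of_length_zero {E : Realization A B 0} (P : PeriodMatching E) (b : B) :
    P.mB b = none :=
  Option.eq_none_iff_forall_ne_some.2 fun a h =>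
    let ⟨i, _⟩ := (E.mem_Abar 0 a).1 (P.mem_Abar_of_mB_eq_some h)
    i.elim0

def payoffA (M : Market A B) (a : A) : ℝ := (P.mA a).elim 0 (M.u a)

def payoffB (M : Market A B) (b : B) : ℝ := (P.mB b).elim 0 (fun a => M.v a b)

def NoBlockingPair (M : Market A B) : Prop :=
  ∀ a ∈ E.Abar t, ∀ b ∈ E.Bbar t, ¬ (P.payoffA M a < M.u a b ∧ P.payoffB M b < M.v a b)

variable {P} {M : Market A B}

theorem payoffA_lt {a : A} {x : ℝ} (h0 : 0 < x) (h : ∀ b, P.mA a = some b → M.u a b < x) :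
    P.payoffA M a < x := by
  unfold payoffA
  cases hb : P.mA a with
  | none => exact h0
  | some b => exact h b hb

theorem payoffA_of_mA_eq_some {a : A} {b : B} (h : P.mA a = some b) : P.payoffA M a = M.u a b := by
  rw [payoffA, h]
  rfl

theorem NoBlockingPair.exists_mB_eq_some (hP : P.NoBlockingPair M) {a : A} {b : B}
    (ha : a ∈ E.Abar t) (hb : b ∈ E.Bbar t) (hlt : P.payoffA M a < M.u a b)
    (hv : 0 < M.v a b) : ∃ a', P.mB b = some a' ∧ M.v a b ≤ M.v a' b := by
  by_contra! h
  refine hP a ha b hb ⟨hlt, ?_⟩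
  unfold payoffB
  cases hb' : P.mB b with
  | none => exact hv
  | some a' => exact h a' hb'

theorem NoBlockingPair.mA_eq_some_of_mutual_top (hP : P.NoBlockingPair M) {a : A} {b : B}
    (ha : a ∈ E.Abar t) (hb : b ∈ E.Bbar t) (hu : 0 < M.u a b) (hv : 0 < M.v a b)
    (hua : ∀ b' ∈ E.Bbar t, b' ≠ b → M.u a b' < M.u a b)
    (hvb : ∀ a' ∈ E.Abar t, a' ≠ a → M.v a' b < M.v a b) : P.mA a = some b := by
  by_contra hab
  have hlt : P.payoffA M a < M.u a b := payoffA_lt hu fun b' h =>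
    hua b' (P.memA a b' h).2 (by rintro rfl; exact hab h)
  obtain ⟨a', hba', hle⟩ := hP.exists_mB_eq_some ha hb hlt hv
  have hne : a' ≠ a := fun h => hab ((P.inv a b).2 (h ▸ hba'))
  exact (hvb a' (P.mem_Abar_of_mB_eq_some hba') hne).not_ge hle

theorem NoBlockingPair.mA_eq_some_of_full_pools [DecidableEq A] [DecidableEq B]
    (hP : P.NoBlockingPair M) {kA gA eA : A} {sB tB nB : B}
    (hA : E.Abar t = {kA, gA, eA}) (hB : E.Bbar t = {sB, tB, nB})
    (hst : sB ≠ tB) (hsn : sB ≠ nB) (htn : tB ≠ nB)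
    (hk_sn : M.u kA sB < M.u kA nB) (hk_nt : M.u kA nB < M.u kA tB) (hk_t : 0 < M.u kA tB)
    (hg_ts : M.u gA tB < M.u gA sB)
    (hv_s : 0 < M.v gA sB) (hv_es : M.v eA sB < M.v gA sB)
    (hv_t : 0 < M.v kA tB) (hv_et : M.v eA tB < M.v kA tB)
    (hv_n : 0 < M.v kA nB) (hv_en : M.v eA nB < M.v kA nB) :
    P.mA kA = some tB := by
  have partner_A : ∀ {a b}, P.mB b = some a → a = kA ∨ a = gA ∨ a = eA := fun h => by
    simpa [hA] using P.mem_Abar_of_mB_eq_some h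
  have partner_B : ∀ {a b}, P.mA a = some b → b = sB ∨ b = tB ∨ b = nB := fun h => by
    simpa [hB] using (P.memA _ _ h).2
  have hkA : kA ∈ E.Abar t := by simp [hA]
  have hgA : gA ∈ E.Abar t := by simp [hA]
  by_contra hkt
  -- `k` prefers `t` to its partner, so `t` holds a partner it likes at least as much: `g`
  have hgt : P.mA gA = some tB := by
    have hlt : P.payoffA M kA < M.u kA tB := payoffA_lt hk_t fun b hb => by
      rcases partner_B hb with rfl | rfl | rfl
      exacts [hk_sn.trans hk_nt, absurd hb hkt, hk_nt]
    obtain ⟨a, hta, hle⟩ := hP.exists_mB_eq_some hkA (by simp [hB]) hlt hv_t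
    rcases partner_A hta with rfl | rfl | rfl
    exacts [absurd ((P.inv _ _).2 hta) hkt, (P.inv _ _).2 hta, absurd hle hv_et.not_ge]
  -- `g` prefers `s` to `t`, so `s` holds a partner it likes at least as much: `k`
  have hks : P.mA kA = some sB := by
    obtain ⟨a, hsa, hle⟩ := hP.exists_mB_eq_some hgA (by simp [hB])
      ((payoffA_of_mA_eq_some hgt).trans_lt hg_ts) hv_s
    rcases partner_A hsa with rfl | rfl | rfl
    · exact (P.inv _ _).2 hsa
    · exact absurd (Option.some_injective _ (((P.inv _ _).2 hsa).symm.trans hgt)) hst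
    · exact absurd hle hv_es.not_ge
  -- `k` prefers `n` to `s`, but `n` can hold neither `k` nor `g` and prefers `k` to `e`
  obtain ⟨a, hna, hle⟩ := hP.exists_mB_eq_some hkA (by simp [hB])
    ((payoffA_of_mA_eq_some hks).trans_lt hk_sn) hv_n
  rcases partner_A hna with rfl | rfl | rfl
  · exact hsn (Option.some_injective _ (((P.inv _ _).2 hna).symm.trans hks)).symm
  · exact htn (Option.some_injective _ (((P.inv _ _).2 hna).symm.trans hgt)).symm
  · exact hle.not_gt hv_en

end PeriodMatching

theorem availA_one (m : Matching A B) (F : Realization A B 1) : availA m F = F.Abar 1 :=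
  Finset.filter_true_of_mem fun a _ => PeriodMatching.mA_eq_none_of_length_zero _ a

theorem availB_one (m : Matching A B) (F : Realization A B 1) : availB m F = F.Bbar 1 :=
  Finset.filter_true_of_mem fun b _ => PeriodMatching.mB_eq_none_of_length_zero _ b

theorem unmatched_eq_or_eq [DecidableEq A] [DecidableEq B] {m : Matching A B} {t : ℕ}
    {E : Realization A B t} {kA gA : A} {sB : B}
    (hA : E.Abar t = {kA, gA}) (hB : E.Bbar t = {sB}) (hk : (m.pm E).mA kA = none) :
    (unmatchedA m E = {kA, gA} ∧ unmatchedB m E = {sB}) ∨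
      (unmatchedA m E = {kA} ∧ unmatchedB m E = ∅) := by
  have partner_A : ∀ {a b}, (m.pm E).mB b = some a → a = kA ∨ a = gA := fun h => by
    simpa [hA] using (m.pm E).mem_Abar_of_mB_eq_some h
  rcases hg : (m.pm E).mA gA with _ | b
  · have hs : (m.pm E).mB sB = none := Option.eq_none_iff_forall_ne_some.2 fun a h => by
      rcases partner_A h with rfl | rfl
      exacts [absurd ((m.pm E).inv _ _ |>.2 h) (by simp [hk]),
        absurd ((m.pm E).inv _ _ |>.2 h) (by simp [hg])]
    left
    constructor
    · rw [unmatchedA, hA, Finset.filter_true_of_mem]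
      simp [hk, hg]
    · rw [unmatchedB, hB, Finset.filter_true_of_mem]
      simp [hs]
  · obtain rfl : b = sB := by simpa [hB] using ((m.pm E).memA _ _ hg).2
    right
    constructor
    · rw [unmatchedA, hA, Finset.filter_insert, Finset.filter_singleton]
      simp [hk, hg]
    · rw [unmatchedB, hB, Finset.filter_singleton, if_neg]
      simp [((m.pm E).inv _ _).1 hg]

theorem matchTimeA_le (m : Matching A B) {n : ℕ} (F : Realization A B n) (a : A) (t : ℕ) :
    matchTimeA m F a t ≤ n :=
  Nat.sInf_le (Set.mem_union_right _ rfl)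

theorem matchTimeB_le (m : Matching A B) {n : ℕ} (F : Realization A B n) (b : B) (t : ℕ) :
    matchTimeB m F b t ≤ n :=
  Nat.sInf_le (Set.mem_union_right _ rfl)

theorem matchTimeA_le_self {m : Matching A B} {n t : ℕ} {F : Realization A B n} {a : A}
    (ht : t ≤ n) (h : ((m.pm (F.trunc ht)).mA a).isSome) : matchTimeA m F a t ≤ t :=
  Nat.sInf_le (Set.mem_union_left _ ⟨le_rfl, ht, h⟩)

theorem matchTimeA_eq_of_forall_eq_none {m : Matching A B} {n t : ℕ} {F : Realization A B n}
    {a : A} (h : ∀ s (hs : s ≤ n), t ≤ s → s < n → (m.pm (F.trunc hs)).mA a = none) :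
    matchTimeA m F a t = n := by
  refine le_antisymm (matchTimeA_le m F a t) (le_csInf ⟨n, Or.inr rfl⟩ ?_)
  rintro s (⟨hts, hs, hsome⟩ | rfl)
  · by_contra! hlt
    simp [h s hs hts hlt] at hsome
  · exact le_rfl

namespace Economy

variable {T : ℕ}

def IsDegenerateAt (G : Economy A B T) (E : Realization A B T) : Prop :=
  ∀ F, G.prob F = if F = E then 1 else 0

noncomputable def dirac (E : Realization A B T) : Economy A B T where
  prob F := if F = E then 1 else 0
  nonneg F := by split_ifs <;> norm_num
  finsupp := (Set.finite_singleton E).subset fun F hF => by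
    by_contra hne
    exact hF (if_neg hne)
  total := by
    rw [finsum_eq_single _ E fun F hF => if_neg hF, if_pos rfl]

variable {G : Economy A B T} {E : Realization A B T}

theorem isDegenerateAt_of_pos_iff (hG : ∀ F, 0 < G.prob F ↔ F = E) : G.IsDegenerateAt E := by
  have h0 : ∀ F, F ≠ E → G.prob F = 0 := fun F hF =>
    ((G.nonneg F).lt_or_eq.resolve_left (mt (hG F).1 hF)).symm
  intro F
  split_ifs with hF
  · subst hF
    simpa [finsum_eq_single _ F h0] using G.total
  · exact h0 F hF

namespace IsDegenerateAt

variable {t : ℕ} {E₀ : Realization A B t}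

theorem inSupport (hG : G.IsDegenerateAt E) (hE : Follows E E₀) : InSupport G E₀ :=
  ⟨E, hE, by rw [hG, if_pos rfl]; exact one_pos⟩

theorem cond_eq (hG : G.IsDegenerateAt E) (hE : Follows E E₀) (F : Realization A B T) :
    cond G E₀ F = if F = E then 1 else 0 := by
  have hmass : condMass G E₀ = 1 := by
    rw [condMass, finsum_eq_single _ E, finsum_eq_if, if_pos hE, hG, if_pos rfl]
    intro F hF
    simp [hG F, hF]
  by_cases hF : F = E
  · subst hF
    simp [cond, hE, hmass, hG F]
  · simp [cond, hG F, hF]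

theorem upay_eq (hG : G.IsDegenerateAt E) (hE : Follows E E₀) (M : Market A B)
    (m : Matching A B) (a : A) :
    Upay M G m a E₀ = M.dA a ^ (matchTimeA m E a t - t) * (m.pm E).payoffA M a := by
  rw [Upay, finsum_eq_single _ E fun F hF => by rw [hG.cond_eq hE, if_neg hF, zero_mul],
    hG.cond_eq hE, if_pos rfl, one_mul]
  rfl

theorem vpay_eq (hG : G.IsDegenerateAt E) (hE : Follows E E₀) (M : Market A B)
    (m : Matching A B) (b : B) :
    Vpay M G m b E₀ = M.dB b ^ (matchTimeB m E b t - t) * (m.pm E).payoffB M b := by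
  rw [Vpay, finsum_eq_single _ E fun F hF => by rw [hG.cond_eq hE, if_neg hF, zero_mul],
    hG.cond_eq hE, if_pos rfl, one_mul]
  rfl

theorem upay_self (hG : G.IsDegenerateAt E) (M : Market A B) (m : Matching A B) (a : A) :
    Upay M G m a E = (m.pm E).payoffA M a := by
  rw [hG.upay_eq E.follows_self, Nat.sub_eq_zero_of_le (matchTimeA_le m E a T), pow_zero,
    one_mul]

theorem vpay_self (hG : G.IsDegenerateAt E) (M : Market A B) (m : Matching A B) (b : B) :
    Vpay M G m b E = (m.pm E).payoffB M b := by
  rw [hG.vpay_eq E.follows_self, Nat.sub_eq_zero_of_le (matchTimeB_le m E b T), pow_zero,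
    one_mul]

theorem upay_of_mA_trunc_eq_some (hG : G.IsDegenerateAt E) (M : Market A B) {m : Matching A B}
    {a : A} {b : B} (h : t ≤ T) (hab : (m.pm (E.trunc h)).mA a = some b) :
    Upay M G m a (E.trunc h) = M.u a b := by
  have hnow : matchTimeA m E a t ≤ t :=
    matchTimeA_le_self h (Option.isSome_iff_exists.2 ⟨b, hab⟩)
  rw [hG.upay_eq (E.follows_trunc h), Nat.sub_eq_zero_of_le hnow, pow_zero, one_mul,
    PeriodMatching.payoffA_of_mA_eq_some (m.irrevA h E a b hab)]

end IsDegenerateAt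

theorem IsDegenerateAt.upay_of_mA_eq_some_of_trunc_eq_none {t : ℕ} {G : Economy A B (t + 1)}
    {E : Realization A B (t + 1)} (hG : G.IsDegenerateAt E) (M : Market A B) {m : Matching A B}
    {a : A} {b : B} (hwait : (m.pm (E.trunc t.le_succ)).mA a = none)
    (hab : (m.pm E).mA a = some b) :
    Upay M G m a (E.trunc t.le_succ) = M.dA a * M.u a b := by
  have hlast : matchTimeA m E a t = t + 1 := matchTimeA_eq_of_forall_eq_none fun s _ h1 h2 => by
    obtain rfl : s = t := by omega
    exact hwait
  rw [hG.upay_eq (E.follows_trunc _), hlast, PeriodMatching.payoffA_of_mA_eq_some hab,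
    Nat.add_sub_cancel_left, pow_one]

end Economy

theorem isDegenerateAt_contEconomy {T t : ℕ} {G : Economy A B T} {E : Realization A B T}
    {E₀ : Realization A B t} (hG : G.IsDegenerateAt E) (hE : Follows E E₀) (m : Matching A B) :
    (contEconomy G m E₀).IsDegenerateAt (contReal m E t) := by
  have hpush : contPush G m E₀ = (Economy.dirac (contReal m E t)).prob := by
    funext F'
    rw [contPush, finsum_eq_single _ E fun F hF => by simp [hG.cond_eq hE, hF],
      finsum_eq_if, hG.cond_eq hE, if_pos rfl]
    by_cases h : contReal m E t = F'
    · simp [Economy.dirac, hE, h]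
    · simp [Economy.dirac, h, Ne.symm h]
  have hex : ∃ Ec : Economy A B (T - t), Ec.prob = contPush G m E₀ := ⟨_, hpush.symm⟩
  intro F
  rw [contEconomy, dif_pos hex, hex.choose_spec, hpush]
  rfl

theorem noBlockingPair_of_mem_dynStable_one {M : Market A B} {G : Economy A B 1}
    {F : Realization A B 1} (hG : G.IsDegenerateAt F) {m : Matching A B}
    (hm : m ∈ DynStable M 1 G) : (m.pm F).NoBlockingPair M := by
  rw [DynStable] at hm
  intro a ha b hb ⟨hu, hv⟩
  refine (hm 1 le_rfl le_rfl F (hG.inSupport F.follows_self)).2.2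
    ⟨a, by rwa [availA_one], b, by rwa [availB_one], ?_, ?_⟩
  · rwa [hG.upay_self]
  · rwa [hG.vpay_self]

theorem not_mem_dynStable_of_lt_upay {M : Market A B} {T t : ℕ} {G : Economy A B T}
    {E : Realization A B t} {m : Matching A B} {a : A} (ht : 1 ≤ t) (hT : t ≤ T)
    (hE : InSupport G E) (ha : a ∈ availA m E)
    (h : ∀ mbar ∈ MD_A M G E m a, Upay M G m a E < Upay M G mbar a E) :
    m ∉ DynStable M T G := by
  intro hm
  rw [DynStable] at hm
  obtain ⟨mbar, hmbar, hle⟩ := (hm t ht hT E hE).1 a ha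
  exact (h mbar hmbar).not_ge hle

theorem mA_eq_some_of_mem_MD_A [DecidableEq A] [DecidableEq B] {M : Market A B}
    {eA kA gA : A} {sB tB nB : B} (hst : sB ≠ tB) (hsn : sB ≠ nB) (htn : tB ≠ nB)
    {E : Realization A B 2}
    (harrA0 : E.arrA ⟨0, two_pos⟩ = {kA, gA}) (harrA1 : E.arrA ⟨1, one_lt_two⟩ = {eA})
    (harrB0 : E.arrB ⟨0, two_pos⟩ = {sB}) (harrB1 : E.arrB ⟨1, one_lt_two⟩ = {tB, nB})
    {G : Economy A B 2} (hG : G.IsDegenerateAt E)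
    (hk_sn : M.u kA sB < M.u kA nB) (hk_nt : M.u kA nB < M.u kA tB) (hk_t : 0 < M.u kA tB)
    (hg_ts : M.u gA tB < M.u gA sB)
    (hv_s : 0 < M.v gA sB) (hv_es : M.v eA sB < M.v gA sB)
    (hv_t : 0 < M.v kA tB) (hv_et : M.v eA tB < M.v kA tB)
    (hv_n : 0 < M.v kA nB) (hv_en : M.v eA nB < M.v kA nB)
    {m mbar : Matching A B} (hmbar : mbar ∈ MD_A M G (E.trunc one_le_two) m kA) :
    (mbar.pm E).mA kA = some tB := by
  obtain ⟨-, hk, -, m', hm', hagree⟩ := hmbar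
  have hE : Follows E (E.trunc one_le_two) := E.follows_trunc _
  have hP := noBlockingPair_of_mem_dynStable_one (isDegenerateAt_contEconomy hG hE mbar) hm'
  have hA : (E.trunc one_le_two).Abar 1 = {kA, gA} := (Realization.Abar_one _ one_pos).trans harrA0
  have hB : (E.trunc one_le_two).Bbar 1 = {sB} := (Realization.Bbar_one _ one_pos).trans harrB0
  rw [← (hagree 1 le_rfl le_rfl E hE).1 kA hk]
  rcases unmatched_eq_or_eq hA hB hk with ⟨hUA, hUB⟩ | ⟨hUA, hUB⟩
  · refine hP.mA_eq_some_of_full_pools ?_ ?_ hst hsn htn hk_sn hk_nt hk_t hg_ts hv_s hv_es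
      hv_t hv_et hv_n hv_en
    · rw [contReal_Abar_one _ _ one_lt_two, hUA, harrA1]
      ext; simp; tauto
    · rw [contReal_Bbar_one _ _ one_lt_two, hUB, harrB1]
      ext; simp
  · have hA' : (contReal mbar E 1).Abar 1 = {kA, eA} := by
      rw [contReal_Abar_one _ _ one_lt_two, hUA, harrA1]
      ext; simp
    have hB' : (contReal mbar E 1).Bbar 1 = {tB, nB} := by
      rw [contReal_Bbar_one _ _ one_lt_two, hUB, harrB1]
      ext; simp
    refine hP.mA_eq_some_of_mutual_top (by simp [hA']) (by simp [hB']) hk_t hv_t ?_ ?_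
    · simpa [hB'] using fun _ => hk_nt
    · simpa [hA'] using fun _ => hv_et

/-- In the two-period economy with `A₁ = {k,g}`, `B₁ = {s}`,
`A₂ = {e}`, `B₂ = {t,n}` and the stated preferences, the matching `m^{B-DA}` — which
matches `k` with `s` in period 1, and `g` with `t` and `e` with `n` in period 2 — is
not dynamically stable: condition (DS2) fails for agent `k` at `(1, E^1)`, since every
conjecture `m̄ ∈ M_D(k, m^{B-DA}, E^1)` gives `k` the payoff `δ_k·u(k,t) > u(k,s)`. -/
theorem mBDA_not_dynamically_stable {A B : Type}
    [DecidableEq A] [DecidableEq B] (M : Market A B)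
    (eA kA gA : A) (sB tB nB : B)
    (hB1 : sB ≠ tB) (hB2 : sB ≠ nB) (hB3 : tB ≠ nB)
    (E : Realization A B 2)
    (harrA0 : E.arrA ⟨0, by omega⟩ = {kA, gA})
    (harrA1 : E.arrA ⟨1, by omega⟩ = {eA})
    (harrB0 : E.arrB ⟨0, by omega⟩ = {sB})
    (harrB1 : E.arrB ⟨1, by omega⟩ = {tB, nB})
    (G : Economy A B 2) (hG : ∀ F : Realization A B 2, 0 < G.prob F ↔ F = E)
    -- Kuhn: (t,1) ≻ (n,0) ≻ (s,0) ≻ (n,1) ≻ single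
    (hu_k1 : M.u kA nB < M.dA kA * M.u kA tB) (hu_k2 : M.u kA sB < M.u kA nB)
    (hu_k4 : 0 < M.dA kA * M.u kA nB)
    -- Gale: (s,0) ≻ (t,1) ≻ single ≻ n, and (s,0) ≻ (t,0)
    (hu_g4 : M.u gA tB < M.u gA sB)
    -- Shapley: k ≻ g ≻ single ≻ e
    (hv_s2 : 0 < M.v gA sB) (hv_s3 : M.v eA sB < 0)
    -- Tucker: g ≻ k ≻ single ≻ e
    (hv_t2 : 0 < M.v kA tB) (hv_t3 : M.v eA tB < 0)
    -- Nash: k ≻ e ≻ single ≻ g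
    (hv_n1 : M.v eA nB < M.v kA nB) (hv_n2 : 0 < M.v eA nB)
    (m : Matching A B)
    (hm1k : (m.pm (E.trunc (by omega : (1:ℕ) ≤ 2))).mA kA = some sB) :
    (∀ mbar ∈ MD_A M G (E.trunc (by omega : (1:ℕ) ≤ 2)) m kA,
        Upay M G mbar kA (E.trunc (by omega : (1:ℕ) ≤ 2)) = M.dA kA * M.u kA tB ∧
        Upay M G m kA (E.trunc (by omega : (1:ℕ) ≤ 2)) <
          Upay M G mbar kA (E.trunc (by omega : (1:ℕ) ≤ 2))) ∧
    m ∉ DynStable M 2 G := by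
  set E₁ := E.trunc (by omega : (1:ℕ) ≤ 2)
  have hG' := Economy.isDegenerateAt_of_pos_iff hG
  have hδ := M.dA_nonneg kA
  have hk_t : 0 < M.u kA tB :=
    pos_of_mul_pos_right ((pos_of_mul_pos_right hu_k4 hδ).trans hu_k1) hδ
  have hk_nt : M.u kA nB < M.u kA tB :=
    hu_k1.trans_le (mul_le_of_le_one_left hk_t.le (M.dA_lt_one kA).le)
  have hUmbar : ∀ mbar ∈ MD_A M G E₁ m kA, Upay M G mbar kA E₁ = M.dA kA * M.u kA tB :=
    fun mbar hmbar => hG'.upay_of_mA_eq_some_of_trunc_eq_none M hmbar.2.1 <|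
      mA_eq_some_of_mem_MD_A hB1 hB2 hB3 harrA0 harrA1 harrB0 harrB1 hG' hu_k2 hk_nt hk_t hu_g4
        hv_s2 (hv_s3.trans hv_s2) hv_t2 (hv_t3.trans hv_t2) (hv_n2.trans hv_n1) hv_n1 hmbar
  have hlt : Upay M G m kA E₁ < M.dA kA * M.u kA tB := by
    rw [hG'.upay_of_mA_trunc_eq_some M _ hm1k]
    exact hu_k2.trans hu_k1
  have hk_avail : kA ∈ availA m E₁ := by
    rw [availA_one, (Realization.Abar_one _ one_pos).trans harrA0]
    simp
  exact ⟨fun mbar hmbar => ⟨hUmbar mbar hmbar, hUmbar mbar hmbar ▸ hlt⟩,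
    not_mem_dynStable_of_lt_upay le_rfl one_le_two (hG'.inSupport (E.follows_trunc _)) hk_avail
      fun mbar hmbar => hUmbar mbar hmbar ▸ hlt⟩

end DynMatch
end
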